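/- Let H be a maximal cyclic subgroup of the discrete Heisenberg group Γ₃ with H ≠ Z(Γ₃), where Z(Γ₃) is the center of Γ₃. Then H is a normal subgroup of its normalizer N(H), and the quotient group N(H)/H is infinite cyclic, i.e. isomorphic to ℤ. -/

import Mathlib

/-- The discrete Heisenberg group `Γ₃`: triples `(a,b,c)` of integers, corresponding to the
upper unitriangular matrix `[[1,a,c],[0,1,b],[0,0,1]]`, with multiplication
`(a,b,c)·(a',b',c') = (a+a', b+b', c+c'+a*b')`. -/
@[ext]
structure Heisenberg where
  a : ℤ
  b : ℤ
  c : ℤ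

namespace Heisenberg

instance : Mul Heisenberg :=
  ⟨fun x y => ⟨x.a + y.a, x.b + y.b, x.c + y.c + x.a * y.b⟩⟩

instance : One Heisenberg := ⟨⟨0, 0, 0⟩⟩

instance : Inv Heisenberg := ⟨fun x => ⟨-x.a, -x.b, -x.c + x.a * x.b⟩⟩

theorem mul_def (x y : Heisenberg) :
    x * y = ⟨x.a + y.a, x.b + y.b, x.c + y.c + x.a * y.b⟩ := rfl

theorem one_def : (1 : Heisenberg) = ⟨0, 0, 0⟩ := rfl

theorem inv_def (x : Heisenberg) : x⁻¹ = ⟨-x.a, -x.b, -x.c + x.a * x.b⟩ := rfl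

instance : Group Heisenberg where
  mul_assoc x y z := by ext <;> simp [mul_def] <;> ring
  one_mul x := by ext <;> simp [mul_def, one_def]
  mul_one x := by ext <;> simp [mul_def, one_def]
  inv_mul_cancel x := by ext <;> simp [mul_def, inv_def, one_def]

end Heisenberg

/-- `H` is a maximal cyclic subgroup of `G`: `H` is cyclic and maximal with respect to
inclusion among cyclic subgroups of `G`. -/
def IsMaximalCyclic {G : Type*} [Group G] (H : Subgroup G) : Prop :=
  IsCyclic H ∧ ∀ K : Subgroup G, IsCyclic K → H ≤ K → K = H

/-!
The generator `g` of `H` is not central. Conjugation moves only the `c`-coordinate, by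
`x.a * g.b - x.b * g.a`, so an element normalizing `⟨g⟩` commutes with `g`: `N(H)` is the
centralizer of `g`. Writing `(g.a, g.b) = m • (p, q)` with `p, q` coprime, this centralizer is
isomorphic to `ℤ²` through `⟨p, q, 0⟩ ^ k * ⟨0, 0, s⟩ ↦ (k, s)`. Maximality of `H` says that `g` is
not a proper power there, so it corresponds to a primitive vector `v`, and `w ↦ det (v, w)`
identifies `ℤ² / ℤ v` with `ℤ`.
-/

theorem IsMaximalCyclic.isUnit_of_zpow_eq {G : Type*} [Group G] {g u : G} {d : ℤ}
    (hmax : IsMaximalCyclic (Subgroup.zpowers g)) (hg : ¬IsOfFinOrder g) (hu : u ^ d = g) :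
    IsUnit d := by
  have hle : Subgroup.zpowers g ≤ Subgroup.zpowers u := Subgroup.zpowers_le.2 ⟨d, hu⟩
  obtain ⟨n, hn⟩ := Subgroup.mem_zpowers_iff.1 (hmax.2 _ inferInstance hle ▸ Subgroup.mem_zpowers u)
  have hnd : n * d = 1 :=
    injective_zpow_iff_not_isOfFinOrder.2 hg (by simp only [zpow_mul, hn, hu, zpow_one])
  exact IsUnit.of_mul_eq_one_right n hnd

lemma Int.isCoprime_of_forall_zsmul_eq {v : ℤ × ℤ}
    (h : ∀ (d : ℤ) (w : ℤ × ℤ), d • w = v → IsUnit d) : IsCoprime v.1 v.2 := by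
  rw [← isRelPrime_iff_isCoprime]
  rintro d ⟨m, hm⟩ ⟨s, hs⟩
  exact h d (m, s) (Prod.ext hm.symm hs.symm)

lemma Int.exists_surjective_ker_eq_zmultiples {v : ℤ × ℤ} (hv : IsCoprime v.1 v.2) :
    ∃ L : ℤ × ℤ →+ ℤ, Function.Surjective L ∧ L.ker = AddSubgroup.zmultiples v := by
  obtain ⟨α, β, hαβ⟩ := hv
  let L : ℤ × ℤ →+ ℤ := AddMonoidHom.mk' (fun w => v.1 * w.2 - v.2 * w.1) fun w w' => by
    simp only [Prod.fst_add, Prod.snd_add]; ring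
  refine ⟨L, fun n => ⟨(-(n * β), n * α), ?_⟩, ?_⟩
  · change v.1 * (n * α) - v.2 * -(n * β) = n
    linear_combination n * hαβ
  ext w
  change v.1 * w.2 - v.2 * w.1 = 0 ↔ w ∈ AddSubgroup.zmultiples v
  simp only [AddSubgroup.mem_zmultiples_iff, Prod.ext_iff, Prod.smul_fst, Prod.smul_snd,
    smul_eq_mul]
  constructor
  · intro h
    exact ⟨α * w.1 + β * w.2, by linear_combination w.1 * hαβ + β * h,
      by linear_combination w.2 * hαβ - α * h⟩
  · rintro ⟨n, h₁, h₂⟩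
    linear_combination v.2 * h₁ - v.1 * h₂

theorem MulEquiv.exists_surjective_ker_eq_zpowers {N : Type*} [Group N]
    (ψ : N ≃* Multiplicative (ℤ × ℤ)) {g : N} (hg : ∀ (u : N) (d : ℤ), u ^ d = g → IsUnit d) :
    ∃ φ : N →* Multiplicative ℤ, Function.Surjective φ ∧ φ.ker = Subgroup.zpowers g := by
  have hv : IsCoprime (ψ g).toAdd.1 (ψ g).toAdd.2 :=
    Int.isCoprime_of_forall_zsmul_eq fun d w hw => hg (ψ.symm (.ofAdd w)) d <| ψ.injective <| by
      rw [map_zpow, MulEquiv.apply_symm_apply, ← ofAdd_zsmul, hw, ofAdd_toAdd]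
  obtain ⟨L, hL, hker⟩ := Int.exists_surjective_ker_eq_zmultiples hv
  refine ⟨(AddMonoidHom.toMultiplicative L).comp ψ.toMonoidHom, fun t => ?_, ?_⟩
  · obtain ⟨w, hw⟩ := hL t.toAdd
    exact ⟨ψ.symm (.ofAdd w), by simp [hw]⟩
  · ext x
    rw [MonoidHom.mem_ker, Subgroup.mem_zpowers_iff]
    calc _ ↔ (ψ x).toAdd ∈ L.ker := by simp
      _ ↔ ∃ n : ℤ, ψ (g ^ n) = ψ x := by
        rw [hker, AddSubgroup.mem_zmultiples_iff]
        simp only [map_zpow, ← toAdd_zpow, Multiplicative.toAdd.injective.eq_iff]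
      _ ↔ _ := by simp only [ψ.injective.eq_iff]

lemma Subgroup.zpowers_subgroupOf {G : Type*} [Group G] {K : Subgroup G} {g : G} (hg : g ∈ K) :
    (Subgroup.zpowers g).subgroupOf K = Subgroup.zpowers ⟨g, hg⟩ := by
  rw [← Subgroup.comap_subtype, ← Subgroup.comap_map_eq_self_of_injective K.subtype_injective
    (Subgroup.zpowers ⟨g, hg⟩), MonoidHom.map_zpowers]
  rfl

namespace Heisenberg

lemma commute_iff {x y : Heisenberg} : Commute x y ↔ x.a * y.b = x.b * y.a := by
  simp only [Commute, SemiconjBy, mul_def, Heisenberg.ext_iff]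
  constructor
  · rintro ⟨-, -, h⟩; linarith
  · intro h; refine ⟨add_comm _ _, add_comm _ _, ?_⟩; linarith

lemma mul_mul_inv (x y : Heisenberg) :
    x * y * x⁻¹ = ⟨y.a, y.b, y.c + x.a * y.b - x.b * y.a⟩ := by
  ext <;> simp only [mul_def, inv_def] <;> ring

def abHom : Heisenberg →* Multiplicative (ℤ × ℤ) where
  toFun x := .ofAdd (x.a, x.b)
  map_one' := rfl
  map_mul' _ _ := rfl

lemma a_zpow (g : Heisenberg) (n : ℤ) : (g ^ n).a = n * g.a := by
  have h := congrArg (fun v => v.toAdd.1) (map_zpow abHom g n)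
  simp only [abHom, MonoidHom.coe_mk, OneHom.coe_mk, toAdd_zpow, toAdd_ofAdd, Prod.smul_fst,
    smul_eq_mul] at h
  exact h

lemma b_zpow (g : Heisenberg) (n : ℤ) : (g ^ n).b = n * g.b := by
  have h := congrArg (fun v => v.toAdd.2) (map_zpow abHom g n)
  simp only [abHom, MonoidHom.coe_mk, OneHom.coe_mk, toAdd_zpow, toAdd_ofAdd, Prod.smul_snd,
    smul_eq_mul] at h
  exact h

lemma mem_center_iff {x : Heisenberg} : x ∈ Subgroup.center Heisenberg ↔ x.a = 0 ∧ x.b = 0 := by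
  rw [Subgroup.mem_center_iff]
  refine ⟨fun h => ?_, fun h y => commute_iff.2 (by simp [h.1, h.2])⟩
  have h₁ := commute_iff.1 (h ⟨1, 0, 0⟩)
  have h₂ := commute_iff.1 (h ⟨0, 1, 0⟩)
  simp only [one_mul, zero_mul] at h₁ h₂
  omega

lemma center_eq_zpowers : Subgroup.center Heisenberg = Subgroup.zpowers ⟨0, 0, 1⟩ := by
  have hz : ∀ n : ℤ, (⟨0, 0, 1⟩ : Heisenberg) ^ n = ⟨0, 0, n⟩ := by
    intro n
    induction n using Int.induction_on with
    | zero => rfl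
    | succ k ih => rw [zpow_add_one, ih]; ext <;> simp [mul_def]
    | pred k ih => rw [zpow_sub_one, ih]; ext <;> simp only [mul_def, inv_def] <;> ring
  ext x
  rw [mem_center_iff, Subgroup.mem_zpowers_iff]
  constructor
  · rintro ⟨ha, hb⟩
    exact ⟨x.c, by rw [hz]; ext <;> simp [ha, hb]⟩
  · rintro ⟨n, rfl⟩
    simp [hz]

lemma not_isOfFinOrder {g : Heisenberg} (hg : g ∉ Subgroup.center Heisenberg) :
    ¬IsOfFinOrder g := by
  rw [isOfFinOrder_iff_zpow_eq_one]
  rintro ⟨n, hn, hgn⟩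
  have ha := a_zpow g n
  have hb := b_zpow g n
  rw [hgn] at ha hb
  exact hg (mem_center_iff.2 ⟨by simpa [hn, one_def] using ha, by simpa [hn, one_def] using hb⟩)

lemma normalizer_zpowers {g : Heisenberg} (hg : g ∉ Subgroup.center Heisenberg) :
    Subgroup.normalizer (Subgroup.zpowers g : Set Heisenberg) = Subgroup.centralizer {g} := by
  refine le_antisymm (fun x hx => ?_) ?_
  · obtain ⟨n, hn⟩ := Subgroup.mem_zpowers_iff.1
      ((Subgroup.mem_normalizer_iff.1 hx g).1 (Subgroup.mem_zpowers g))
    have hn1 : n = 1 := by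
      have ha := congrArg Heisenberg.a hn
      have hb := congrArg Heisenberg.b hn
      simp only [a_zpow, b_zpow, mul_mul_inv] at ha hb
      rw [mem_center_iff, not_and_or] at hg
      rcases hg with hg | hg
      · exact mul_left_eq_self₀.1 ha |>.resolve_right hg
      · exact mul_left_eq_self₀.1 hb |>.resolve_right hg
    rw [hn1, zpow_one] at hn
    exact Subgroup.mem_centralizer_singleton_iff.2 (mul_inv_eq_iff_eq_mul.1 hn.symm)
  · rw [← Subgroup.centralizer_closure, ← Subgroup.zpowers_eq_closure]
    exact Subgroup.centralizer_le_normalizer _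

lemma mem_centralizer_singleton_iff {x e : Heisenberg} :
    x ∈ Subgroup.centralizer {e} ↔ x.a * e.b = x.b * e.a :=
  Subgroup.mem_centralizer_singleton_iff.trans commute_iff

def triangle (n : ℤ) : ℤ := n * (n - 1) / 2

lemma triangle_add (m n : ℤ) : triangle (m + n) = triangle m + triangle n + m * n := by
  rw [triangle, show (m + n) * (m + n - 1) = m * (m - 1) + n * (n - 1) + m * n * 2 by ring,
    Int.add_mul_ediv_right _ _ two_ne_zero,
    Int.add_ediv_of_dvd_right (Int.even_mul_pred_self n).two_dvd, triangle, triangle]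

section centralizer

variable {e : Heisenberg} {p' q' : ℤ}

lemma eq_mul_of_mem_centralizer (hbez : e.a * p' + e.b * q' = 1) {x : Heisenberg}
    (hx : x ∈ Subgroup.centralizer {e}) :
    x.a = (x.a * p' + x.b * q') * e.a ∧ x.b = (x.a * p' + x.b * q') * e.b := by
  rw [mem_centralizer_singleton_iff] at hx
  constructor
  · linear_combination q' * hx - x.a * hbez
  · linear_combination -p' * hx - x.b * hbez

/-- `⟨e.a, e.b, 0⟩ ^ k * ⟨0, 0, s⟩ ↦ (k, s)`; the correction `e.a * e.b * triangle k` is the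
`c`-coordinate of `⟨e.a, e.b, 0⟩ ^ k`. -/
def centralizerEquiv (hbez : e.a * p' + e.b * q' = 1) :
    Subgroup.centralizer {e} ≃* Multiplicative (ℤ × ℤ) where
  toFun x :=
    .ofAdd (x.1.a * p' + x.1.b * q', x.1.c - e.a * e.b * triangle (x.1.a * p' + x.1.b * q'))
  invFun v := ⟨⟨v.toAdd.1 * e.a, v.toAdd.1 * e.b, v.toAdd.2 + e.a * e.b * triangle v.toAdd.1⟩,
    mem_centralizer_singleton_iff.2 (by ring)⟩
  left_inv x := by
    obtain ⟨ha, hb⟩ := eq_mul_of_mem_centralizer hbez x.2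
    ext
    · exact ha.symm
    · exact hb.symm
    · simp
  right_inv v := by
    ext
    · simp only [toAdd_ofAdd]; linear_combination v.toAdd.1 * hbez
    · simp only [toAdd_ofAdd]
      rw [show v.toAdd.1 * e.a * p' + v.toAdd.1 * e.b * q' = v.toAdd.1 by
        linear_combination v.toAdd.1 * hbez]
      ring
  map_mul' x y := by
    obtain ⟨hxa, -⟩ := eq_mul_of_mem_centralizer hbez x.2
    obtain ⟨-, hyb⟩ := eq_mul_of_mem_centralizer hbez y.2
    ext
    · simp only [Subgroup.coe_mul, mul_def, toAdd_ofAdd, toAdd_mul, Prod.fst_add]; ring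
    · simp only [Subgroup.coe_mul, mul_def, toAdd_ofAdd, toAdd_mul, Prod.snd_add]
      rw [show (x.1.a + y.1.a) * p' + (x.1.b + y.1.b) * q' =
        (x.1.a * p' + x.1.b * q') + (y.1.a * p' + y.1.b * q') by ring, triangle_add]
      linear_combination y.1.b * hxa + e.a * (x.1.a * p' + x.1.b * q') * hyb

end centralizer

lemma exists_primitive_centralizer_eq {g : Heisenberg} (hg : g ∉ Subgroup.center Heisenberg) :
    ∃ (e : Heisenberg) (p' q' : ℤ),
      e.a * p' + e.b * q' = 1 ∧ Subgroup.centralizer {g} = Subgroup.centralizer {e} := by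
  rw [mem_center_iff, not_and_or] at hg
  obtain ⟨d, p, q, hd, hpq, ha, hb⟩ := Int.exists_gcd_one' (Int.gcd_pos_iff.2 hg)
  obtain ⟨p', q', hbez⟩ := Int.isCoprime_iff_gcd_eq_one.2 hpq
  refine ⟨⟨p, q, 0⟩, p', q', by linear_combination hbez, ?_⟩
  ext x
  simp only [mem_centralizer_singleton_iff, ha, hb]
  have hd : (d : ℤ) ≠ 0 := by positivity
  constructor <;> intro h
  · exact mul_right_cancel₀ hd (by linear_combination h)
  · linear_combination d * h

end Heisenberg

open Heisenberg

/-- For a maximal cyclic subgroup `H ≠ Z(Γ₃)` of the discrete Heisenberg group `Γ₃`,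
`H` is normal in its normalizer `N(H)` and the quotient `N(H)/H` is infinite cyclic,
i.e. isomorphic to `ℤ`. -/
theorem heisenberg_normalizer_quotient (H : Subgroup Heisenberg)
    (hmax : IsMaximalCyclic H) (hne : H ≠ Subgroup.center Heisenberg) :
    (H.subgroupOf (Subgroup.normalizer (H : Set Heisenberg))).Normal ∧
      Nonempty (((Subgroup.normalizer (H : Set Heisenberg)) ⧸ H.subgroupOf (Subgroup.normalizer (H : Set Heisenberg))) ≃* Multiplicative ℤ) := by
  obtain ⟨g, rfl⟩ := (Subgroup.isCyclic_iff_exists_zpowers_eq_top H).1 hmax.1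
  have hg : g ∉ Subgroup.center Heisenberg := fun hg =>
    hne (hmax.2 _ (center_eq_zpowers ▸ inferInstance) (Subgroup.zpowers_le.2 hg)).symm
  obtain ⟨e, p', q', hbez, he⟩ := exists_primitive_centralizer_eq hg
  have hgN := Subgroup.le_normalizer (Subgroup.mem_zpowers g)
  let ψ : Subgroup.normalizer (Subgroup.zpowers g : Set Heisenberg) ≃* Multiplicative (ℤ × ℤ) :=
    (MulEquiv.subgroupCongr ((normalizer_zpowers hg).trans he)).trans (centralizerEquiv hbez)
  obtain ⟨φ, hφ, hker⟩ := ψ.exists_surjective_ker_eq_zpowers (g := ⟨g, hgN⟩) fun u d hu =>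
      hmax.isUnit_of_zpow_eq (not_isOfFinOrder hg) (by simpa using congrArg Subtype.val hu)
  rw [← Subgroup.zpowers_subgroupOf hgN] at hker
  exact ⟨Subgroup.normal_in_normalizer, ⟨(QuotientGroup.quotientMulEquivOfEq hker.symm).trans
    (QuotientGroup.quotientKerEquivOfSurjective φ hφ)⟩⟩
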